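/- (Theorem 1, fidelity form) Let d ≥ 1 and let ρ_{ABC} be a density matrix on ℂ^d ⊗ ℂ^d ⊗ ℂ^{d_C} such that its partial trace over C, ρ_{AB} = tr_C ρ_{ABC}, is separable. Then for every maximally entangled state Ψ on ℂ^d ⊗ ℂ^d and every density matrix ρ_C on ℂ^{d_C}, the Uhlmann root fidelity satisfies F(ρ_{ABC}, |Ψ⟩⟨Ψ| ⊗ ρ_C) ≤ 1/√d; equivalently, the Bures angle arccos F(ρ_{ABC}, |Ψ⟩⟨Ψ| ⊗ ρ_C) is at least arccos(1/√d). -/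

import Mathlib

open scoped Matrix Kronecker ComplexOrder

noncomputable section

/-- Hermitian inner product on `n → ℂ` (conjugate-linear in the first argument). -/
def cinner {n : Type*} [Fintype n] (v w : n → ℂ) : ℂ :=
  ∑ i, (starRingEnd ℂ) (v i) * w i

/-- Tensor (Kronecker) product of vectors. -/
def tensorVec {α β : Type*} (v : α → ℂ) (w : β → ℂ) : α × β → ℂ :=
  fun p => v p.1 * w p.2

/-- The projector `|v⟩⟨v|`. -/
def vecProj {n : Type*} (v : n → ℂ) : Matrix n n ℂ :=
  Matrix.of fun i j => v i * (starRingEnd ℂ) (v j)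

/-- A density matrix: positive semidefinite with unit trace. -/
def IsDensityMatrix {n : Type*} [Fintype n] (ρ : Matrix n n ℂ) : Prop :=
  ρ.PosSemidef ∧ ρ.trace = 1

open Classical in
/-- Positive semidefinite square root (0 on non-PSD input). -/
def msqrt {n : Type*} [Fintype n] [DecidableEq n] (ρ : Matrix n n ℂ) : Matrix n n ℂ :=
  if h : ρ.PosSemidef then
    h.1.eigenvectorUnitary.1 * Matrix.diagonal ((↑) ∘ (√·) ∘ h.1.eigenvalues) *
      (star h.1.eigenvectorUnitary : Matrix n n ℂ)
  else 0

/-- Uhlmann root fidelity `F(ρ,σ) = tr √(√ρ σ √ρ)`. -/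
def rootFidelity {n : Type*} [Fintype n] [DecidableEq n] (ρ σ : Matrix n n ℂ) : ℝ :=
  ((msqrt (msqrt ρ * σ * msqrt ρ)).trace).re

/-- Partial trace over the second tensor factor. -/
def ptraceC {α γ : Type*} [Fintype γ] (ρ : Matrix (α × γ) (α × γ) ℂ) : Matrix α α ℂ :=
  Matrix.of fun i j => ∑ k, ρ (i, k) (j, k)

/-- Partial trace over the first tensor factor. -/
def ptraceA {α β : Type*} [Fintype α] (ρ : Matrix (α × β) (α × β) ℂ) : Matrix β β ℂ :=
  Matrix.of fun i j => ∑ k, ρ (k, i) (k, j)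

/-- Partial transpose on the second tensor factor. -/
def ptB {α β : Type*} (ρ : Matrix (α × β) (α × β) ℂ) : Matrix (α × β) (α × β) ℂ :=
  Matrix.of fun p q => ρ (p.1, q.2) (q.1, p.2)

open Classical in
/-- Negativity: the sum of the absolute values of the negative eigenvalues of
the partial transpose (0 if the partial transpose is not Hermitian). -/
def negativity {α β : Type*} [Fintype α] [Fintype β] [DecidableEq α] [DecidableEq β]
    (ρ : Matrix (α × β) (α × β) ℂ) : ℝ :=
  if h : (ptB ρ).IsHermitian then ∑ i, max 0 (- h.eigenvalues i) else 0

/-- A family of vectors is an orthonormal basis family (orthonormal, indexed by the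
same finite type as the dimension, hence a basis). -/
def IsONB {n : Type*} [Fintype n] [DecidableEq n] (x : n → n → ℂ) : Prop :=
  ∀ j k, cinner (x j) (x k) = if j = k then 1 else 0

/-- Separability: a finite convex combination of projectors onto product unit vectors. -/
def IsSeparableDM {α β : Type*} [Fintype α] [Fintype β]
    (ρ : Matrix (α × β) (α × β) ℂ) : Prop :=
  ∃ (m : ℕ) (p : Fin m → ℝ) (a : Fin m → α → ℂ) (b : Fin m → β → ℂ),
    (∀ j, 0 ≤ p j) ∧ (∑ j, p j = 1) ∧
    (∀ j, cinner (a j) (a j) = 1) ∧ (∀ j, cinner (b j) (b j) = 1) ∧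
    ρ = ∑ j, (p j : ℂ) • vecProj (tensorVec (a j) (b j))

/-- A maximally entangled state on `ℂ^d ⊗ ℂ^d`. -/
def IsMaxEnt {d : ℕ} (Ψ : Fin d × Fin d → ℂ) : Prop :=
  ∃ x y : Fin d → Fin d → ℂ, IsONB x ∧ IsONB y ∧
    Ψ = ((Real.sqrt d : ℂ)⁻¹) • ∑ j, tensorVec (x j) (y j)

/-!
Write `P = |Ψ⟩⟨Ψ|`, `σ = P ⊗ ρ_C` and `Q = P ⊗ 1`. Since `√σ = P ⊗ √ρ_C` is fixed by `Q`,
`√ρ σ √ρ = X Xᴴ` with `X = (√ρ Q) √σ`, and Hölder's inequality `‖A B‖₁ ≤ ‖A‖₂ ‖B‖₂` gives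
`F(ρ, σ) ≤ √(tr ρ Q) · √(tr σ) = √(tr ρ_AB P)`. For a separable `ρ_AB = ∑ p_j |a_j b_j⟩⟨a_j b_j|`
this is `∑ p_j |⟨Ψ, a_j ⊗ b_j⟩|²`, and each overlap of a product vector with a maximally entangled
state is at most `1/d` by Cauchy–Schwarz and Bessel's inequality in the two Schmidt bases.
-/

section Msqrt

open scoped MatrixOrder

variable {n : Type*} [Fintype n] [DecidableEq n]

lemma msqrt_eq_cfcSqrt {ρ : Matrix n n ℂ} (hρ : ρ.PosSemidef) : msqrt ρ = CFC.sqrt ρ := by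
  rw [msqrt, dif_pos hρ, CFC.sqrt_eq_cfc, cfc_nnreal_eq_real _ ρ hρ.nonneg, hρ.1.cfc_eq]
  simp only [Matrix.IsHermitian.cfc, Unitary.conjStarAlgAut_apply]
  congr 3
  funext i
  simp [Real.coe_sqrt, hρ.eigenvalues_nonneg i]

lemma posSemidef_msqrt (ρ : Matrix n n ℂ) : (msqrt ρ).PosSemidef := by
  by_cases hρ : ρ.PosSemidef
  · rw [msqrt_eq_cfcSqrt hρ]
    exact Matrix.nonneg_iff_posSemidef.mp (CFC.sqrt_nonneg ρ)
  · rw [msqrt, dif_neg hρ]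
    exact .zero

lemma msqrt_mul_msqrt {ρ : Matrix n n ℂ} (hρ : ρ.PosSemidef) : msqrt ρ * msqrt ρ = ρ := by
  rw [msqrt_eq_cfcSqrt hρ]
  exact CFC.sqrt_mul_sqrt_self ρ hρ.nonneg

lemma msqrt_mul_self {A : Matrix n n ℂ} (hA : A.PosSemidef) : msqrt (A * A) = A := by
  have hAA : (A * A).PosSemidef := by
    simpa [hA.1.eq] using Matrix.posSemidef_self_mul_conjTranspose A
  rw [msqrt_eq_cfcSqrt hAA, CFC.sqrt_eq_iff _ _ hAA.nonneg hA.nonneg]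

lemma msqrt_eq_self {A : Matrix n n ℂ} (hA : A.PosSemidef) (h : A * A = A) : msqrt A = A := by
  simpa [h] using msqrt_mul_self hA

lemma msqrt_kronecker {α β : Type*} [Fintype α] [DecidableEq α] [Fintype β] [DecidableEq β]
    {A : Matrix α α ℂ} {B : Matrix β β ℂ} (hA : A.PosSemidef) (hB : B.PosSemidef) :
    msqrt (A ⊗ₖ B) = msqrt A ⊗ₖ msqrt B := by
  conv_lhs => rw [← msqrt_mul_msqrt hA, ← msqrt_mul_msqrt hB, Matrix.mul_kronecker_mul]
  exact msqrt_mul_self ((posSemidef_msqrt A).kronecker (posSemidef_msqrt B))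

/-- The Moore–Penrose inverse of `√M` (the junk value `(√0)⁻¹ = 0` is what makes it one). -/
def pinvSqrt (M : Matrix n n ℂ) : Matrix n n ℂ := cfc (fun x : ℝ => (√x)⁻¹) M

lemma isHermitian_pinvSqrt (M : Matrix n n ℂ) : (pinvSqrt M).IsHermitian :=
  IsSelfAdjoint.cfc

lemma pinvSqrt_mul_self {M : Matrix n n ℂ} (hM : M.PosSemidef) :
    pinvSqrt M * M = msqrt M := by
  have hc (f : ℝ → ℝ) : ContinuousOn f (spectrum ℝ M) := M.finite_real_spectrum.continuousOn f
  rw [pinvSqrt, msqrt_eq_cfcSqrt hM, CFC.sqrt_eq_real_sqrt M hM.nonneg, cfcₙ_eq_cfc]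
  nth_rewrite 2 [← cfc_id' ℝ M]
  rw [← cfc_mul _ _ M (hc _) (hc _)]
  refine cfc_congr fun x _ => ?_
  rw [inv_mul_eq_div, Real.div_sqrt]

lemma pinvSqrt_mul_mul_pinvSqrt_mul_pinvSqrt {M : Matrix n n ℂ} (hM : M.PosSemidef) :
    pinvSqrt M * M * pinvSqrt M * pinvSqrt M = pinvSqrt M := by
  have hc (f : ℝ → ℝ) : ContinuousOn f (spectrum ℝ M) := M.finite_real_spectrum.continuousOn f
  rw [pinvSqrt]
  nth_rewrite 2 [← cfc_id' ℝ M]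
  rw [← cfc_mul _ _ M (hc _) (hc _), ← cfc_mul _ _ M (hc _) (hc _), ← cfc_mul _ _ M (hc _) (hc _)]
  refine cfc_congr fun x _ => ?_
  rw [inv_mul_eq_div, Real.div_sqrt]
  rcases eq_or_ne (√x) 0 with h | h <;> simp [h]

end Msqrt

section TraceNorm

variable {m k l : Type*} [Fintype m] [Fintype k] [Fintype l]

lemma re_trace_mul_conjTranspose_self (X : Matrix m k ℂ) :
    (X * Xᴴ).trace.re = ∑ i, ∑ j, ‖X i j‖ ^ 2 := by
  simp only [Matrix.trace, Matrix.diag, Matrix.mul_apply, Matrix.conjTranspose_apply,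
    Complex.re_sum]
  refine Finset.sum_congr rfl fun i _ => Finset.sum_congr rfl fun j _ => ?_
  rw [RCLike.star_def, Complex.mul_conj, Complex.ofReal_re, Complex.normSq_eq_norm_sq]

lemma norm_trace_mul_le (X : Matrix m k ℂ) (Y : Matrix k m ℂ) :
    ‖(X * Y).trace‖ ≤ √(X * Xᴴ).trace.re * √(Y * Yᴴ).trace.re :=
  calc ‖(X * Y).trace‖ ≤ ∑ p : m × k, ‖X p.1 p.2‖ * ‖Y p.2 p.1‖ := by
        simp only [Matrix.trace, Matrix.diag, Matrix.mul_apply, Fintype.sum_prod_type, ← norm_mul]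
        exact (norm_sum_le _ _).trans (Finset.sum_le_sum fun i _ => norm_sum_le _ _)
    _ ≤ √(∑ p : m × k, ‖X p.1 p.2‖ ^ 2) * √(∑ p : m × k, ‖Y p.2 p.1‖ ^ 2) :=
        Real.sum_mul_le_sqrt_mul_sqrt _ _ _
    _ = √(X * Xᴴ).trace.re * √(Y * Yᴴ).trace.re := by
        rw [re_trace_mul_conjTranspose_self, re_trace_mul_conjTranspose_self, Fintype.sum_prod_type,
          Fintype.sum_prod_type, Finset.sum_comm (γ := k)]

lemma re_trace_mul_mul_conjTranspose_le (B : Matrix k l ℂ) {G : Matrix l l ℂ}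
    (hG : G.IsHermitian) (hGG : G * G = G) :
    (B * G * Bᴴ).trace.re ≤ (B * Bᴴ).trace.re := by
  have hsandwich : B * G * (G * Bᴴ) = B * G * Bᴴ := by
    rw [Matrix.mul_assoc, ← Matrix.mul_assoc G, hGG, Matrix.mul_assoc]
  have hdiff : B * Bᴴ - B * G * Bᴴ = (B - B * G) * (B - B * G)ᴴ := by
    rw [Matrix.conjTranspose_sub, Matrix.conjTranspose_mul, hG.eq, Matrix.sub_mul, Matrix.mul_sub,
      Matrix.mul_sub, hsandwich, Matrix.mul_assoc B G Bᴴ]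
    abel
  have hnonneg := (Complex.nonneg_iff.mp
    (Matrix.posSemidef_self_mul_conjTranspose (B - B * G)).trace_nonneg).1
  rw [← hdiff, Matrix.trace_sub, Complex.sub_re] at hnonneg
  simpa using hnonneg

/-- Hölder's inequality `‖A B‖₁ ≤ ‖A‖₂ ‖B‖₂` between the trace norm and the Frobenius norm. -/
lemma re_trace_msqrt_mul_conjTranspose_le [DecidableEq m] (A : Matrix m k ℂ) (B : Matrix k l ℂ) :
    (msqrt ((A * B) * (A * B)ᴴ)).trace.re ≤ √(A * Aᴴ).trace.re * √(B * Bᴴ).trace.re := by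
  set C := A * B
  have hM : (C * Cᴴ).PosSemidef := Matrix.posSemidef_self_mul_conjTranspose C
  set T := pinvSqrt (C * Cᴴ)
  have hT : Tᴴ = T := (isHermitian_pinvSqrt _).eq
  -- `E` is a partial isometry, so `E Eᴴ` is an orthogonal projection
  set E := Cᴴ * T
  have hG : (E * Eᴴ).IsHermitian := Matrix.isHermitian_mul_conjTranspose_self E
  have hGG : E * Eᴴ * (E * Eᴴ) = E * Eᴴ := by
    have hTMT : T * (C * Cᴴ) * T * T = T := pinvSqrt_mul_mul_pinvSqrt_mul_pinvSqrt hM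
    simp only [E, Matrix.conjTranspose_mul, hT, Matrix.conjTranspose_conjTranspose]
    calc Cᴴ * T * (T * C) * (Cᴴ * T * (T * C)) = Cᴴ * (T * (T * (C * Cᴴ) * T * T)) * C := by
          simp only [Matrix.mul_assoc]
      _ = Cᴴ * T * (T * C) := by rw [hTMT]; simp only [Matrix.mul_assoc]
  have htrace : (msqrt (C * Cᴴ)).trace = (A * (B * E)).trace := by
    rw [← pinvSqrt_mul_self hM, Matrix.trace_mul_comm]
    change (A * B * Cᴴ * T).trace = _
    simp only [E, Matrix.mul_assoc]
  calc (msqrt (C * Cᴴ)).trace.re ≤ ‖(A * (B * E)).trace‖ := htrace ▸ Complex.re_le_norm _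
    _ ≤ √(A * Aᴴ).trace.re * √((B * E) * (B * E)ᴴ).trace.re := norm_trace_mul_le _ _
    _ ≤ √(A * Aᴴ).trace.re * √(B * Bᴴ).trace.re := by
        rw [Matrix.conjTranspose_mul, ← Matrix.mul_assoc, Matrix.mul_assoc B]
        exact mul_le_mul_of_nonneg_left
          (Real.sqrt_le_sqrt (re_trace_mul_mul_conjTranspose_le B hG hGG)) (Real.sqrt_nonneg _)

end TraceNorm

section Fidelity

variable {n : Type*} [Fintype n] [DecidableEq n]

lemma rootFidelity_le_of_mul_msqrt_eq {ρ σ Q : Matrix n n ℂ} (hρ : ρ.PosSemidef)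
    (hσ : σ.PosSemidef) (hQ : Q.IsHermitian) (hQQ : Q * Q = Q) (hQσ : Q * msqrt σ = msqrt σ) :
    rootFidelity ρ σ ≤ √(ρ * Q).trace.re * √σ.trace.re := by
  set R := msqrt ρ
  set S := msqrt σ
  have hR : Rᴴ = R := (posSemidef_msqrt ρ).1.eq
  have hS : Sᴴ = S := (posSemidef_msqrt σ).1.eq
  have hRR : R * R = ρ := msqrt_mul_msqrt hρ
  have hSS : S * S = σ := msqrt_mul_msqrt hσ
  have hfactor : R * σ * R = (R * Q * S) * (R * Q * S)ᴴ := by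
    rw [mul_assoc R Q S, hQσ, Matrix.conjTranspose_mul, hR, hS, ← hSS]
    simp only [mul_assoc]
  have hA : ((R * Q) * (R * Q)ᴴ).trace = (ρ * Q).trace := by
    rw [Matrix.conjTranspose_mul, hR, hQ.eq, mul_assoc, ← mul_assoc Q, hQQ, Matrix.trace_mul_comm,
      mul_assoc, Matrix.trace_mul_comm, hRR]
  have hB : (S * Sᴴ).trace = σ.trace := by rw [hS, hSS]
  rw [rootFidelity, hfactor, ← hA, ← hB]
  exact re_trace_msqrt_mul_conjTranspose_le (R * Q) S

end Fidelity

section Vectors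

variable {n : Type*}

lemma vecProj_eq_vecMulVec (v : n → ℂ) : vecProj v = Matrix.vecMulVec v (star v) := rfl

variable [Fintype n]

lemma cinner_smul_left (c : ℂ) (v w : n → ℂ) : cinner (c • v) w = star c * cinner v w := by
  simp only [cinner, Pi.smul_apply, smul_eq_mul, map_mul, Finset.mul_sum, mul_assoc]
  rfl

lemma cinner_smul_right (c : ℂ) (v w : n → ℂ) : cinner v (c • w) = c * cinner v w := by
  simp only [cinner, Pi.smul_apply, smul_eq_mul, Finset.mul_sum]
  exact Finset.sum_congr rfl fun i _ => by ring

lemma cinner_sum_left {ι : Type*} (s : Finset ι) (v : ι → n → ℂ) (w : n → ℂ) :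
    cinner (∑ j ∈ s, v j) w = ∑ j ∈ s, cinner (v j) w := by
  simp only [cinner, Finset.sum_apply, map_sum, Finset.sum_mul]
  exact Finset.sum_comm

lemma cinner_sum_right {ι : Type*} (s : Finset ι) (v : n → ℂ) (w : ι → n → ℂ) :
    cinner v (∑ j ∈ s, w j) = ∑ j ∈ s, cinner v (w j) := by
  simp only [cinner, Finset.sum_apply, Finset.mul_sum]
  exact Finset.sum_comm

lemma cinner_tensorVec {m : Type*} [Fintype m] (a c : n → ℂ) (b e : m → ℂ) :
    cinner (tensorVec a b) (tensorVec c e) = cinner a c * cinner b e := by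
  simp only [cinner, tensorVec, Fintype.sum_prod_type, Finset.sum_mul_sum, map_mul]
  refine Finset.sum_congr rfl fun i _ => Finset.sum_congr rfl fun j _ => ?_
  ring

lemma cinner_eq_inner (v w : n → ℂ) :
    cinner v w = inner ℂ (WithLp.toLp 2 v : EuclideanSpace ℂ n) (WithLp.toLp 2 w) := by
  simp [cinner, PiLp.inner_apply, mul_comm]

lemma IsONB.orthonormal [DecidableEq n] {x : n → n → ℂ} (hx : IsONB x) :
    Orthonormal ℂ fun j => (WithLp.toLp 2 (x j) : EuclideanSpace ℂ n) :=
  orthonormal_iff_ite.mpr fun j k => by rw [← cinner_eq_inner, hx]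

lemma IsONB.sum_norm_cinner_sq_le [DecidableEq n] {x : n → n → ℂ} (hx : IsONB x) (a : n → ℂ) :
    ∑ j, ‖cinner (x j) a‖ ^ 2 ≤ (cinner a a).re := by
  have hBessel := hx.orthonormal.sum_inner_products_le
    (WithLp.toLp 2 a : EuclideanSpace ℂ n) (s := Finset.univ)
  rw [norm_sq_eq_re_inner (𝕜 := ℂ)] at hBessel
  simpa only [cinner_eq_inner, RCLike.re_to_complex] using hBessel

lemma cinner_eq_dotProduct (v w : n → ℂ) : cinner v w = star v ⬝ᵥ w := rfl

lemma star_cinner (v w : n → ℂ) : star (cinner v w) = cinner w v := by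
  rw [cinner_eq_dotProduct, cinner_eq_dotProduct, Matrix.star_dotProduct, star_star,
    dotProduct_comm]

lemma posSemidef_vecProj (v : n → ℂ) : (vecProj v).PosSemidef :=
  Matrix.posSemidef_vecMulVec_self_star v

lemma trace_vecProj (v : n → ℂ) : (vecProj v).trace = cinner v v := by
  rw [vecProj_eq_vecMulVec, Matrix.trace_vecMulVec, dotProduct_comm, cinner_eq_dotProduct]

lemma vecProj_mul_vecProj (v w : n → ℂ) :
    vecProj v * vecProj w = cinner v w • Matrix.vecMulVec v (star w) := by
  rw [vecProj_eq_vecMulVec, vecProj_eq_vecMulVec, Matrix.vecMulVec_mul_vecMulVec,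
    Matrix.vecMulVec_smul, cinner_eq_dotProduct]

lemma vecProj_mul_self {v : n → ℂ} (hv : cinner v v = 1) : vecProj v * vecProj v = vecProj v := by
  rw [vecProj_mul_vecProj, hv, one_smul, vecProj_eq_vecMulVec]

lemma trace_vecProj_mul_vecProj (v w : n → ℂ) :
    (vecProj v * vecProj w).trace = (‖cinner w v‖ ^ 2 : ℝ) := by
  rw [vecProj_mul_vecProj, Matrix.trace_smul, Matrix.trace_vecMulVec, dotProduct_comm,
    ← cinner_eq_dotProduct, smul_eq_mul, ← star_cinner w v, Complex.ofReal_pow,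
    RCLike.star_def, Complex.conj_mul']

end Vectors

namespace IsMaxEnt

variable {d : ℕ} {Ψ : Fin d × Fin d → ℂ}

lemma cinner_self (hΨ : IsMaxEnt Ψ) (hd : 0 < d) : cinner Ψ Ψ = 1 := by
  obtain ⟨x, y, hx, hy, rfl⟩ := hΨ
  have hpair (j k : Fin d) : cinner (tensorVec (x j) (y j)) (tensorVec (x k) (y k)) =
      if j = k then 1 else 0 := by
    rw [cinner_tensorVec, hx, hy]; split_ifs <;> simp
  rw [cinner_smul_left, cinner_smul_right, cinner_sum_left]
  simp_rw [cinner_sum_right, hpair]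
  simp only [Finset.sum_ite_eq, Finset.mem_univ, if_true, Finset.sum_const, Finset.card_univ,
    Fintype.card_fin, nsmul_eq_mul, mul_one]
  have hnorm : (√(d : ℝ))⁻¹ * ((√(d : ℝ))⁻¹ * d) = 1 := by
    rw [← mul_assoc, ← mul_inv, Real.mul_self_sqrt (Nat.cast_nonneg d)]
    exact inv_mul_cancel₀ (by positivity)
  rw [Complex.star_def, ← Complex.ofReal_inv, Complex.conj_ofReal]
  exact_mod_cast hnorm

lemma norm_cinner_tensorVec_sq_le (hΨ : IsMaxEnt Ψ) {a b : Fin d → ℂ} (ha : cinner a a = 1)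
    (hb : cinner b b = 1) : ‖cinner Ψ (tensorVec a b)‖ ^ 2 ≤ (d : ℝ)⁻¹ := by
  obtain ⟨x, y, hx, hy, rfl⟩ := hΨ
  have hsum : ‖∑ k, cinner (x k) a * cinner (y k) b‖ ≤ 1 :=
    calc ‖∑ k, cinner (x k) a * cinner (y k) b‖
        ≤ ∑ k, ‖cinner (x k) a‖ * ‖cinner (y k) b‖ := by
          simpa only [norm_mul] using norm_sum_le Finset.univ
            fun k => cinner (x k) a * cinner (y k) b
      _ ≤ √(∑ k, ‖cinner (x k) a‖ ^ 2) * √(∑ k, ‖cinner (y k) b‖ ^ 2) :=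
          Real.sum_mul_le_sqrt_mul_sqrt _ _ _
      _ ≤ √1 * √1 := by
          gcongr
          · simpa [ha] using hx.sum_norm_cinner_sq_le a
          · simpa [hb] using hy.sum_norm_cinner_sq_le b
      _ = 1 := by simp
  rw [cinner_smul_left, cinner_sum_left]
  simp only [cinner_tensorVec]
  rw [norm_mul, norm_star, norm_inv, Complex.norm_real, Real.norm_of_nonneg (Real.sqrt_nonneg _),
    mul_pow, inv_pow, Real.sq_sqrt (Nat.cast_nonneg d)]
  exact mul_le_of_le_one_right (by positivity) (pow_le_one₀ (norm_nonneg _) hsum)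

end IsMaxEnt

lemma IsSeparableDM.re_trace_mul_vecProj_le {d : ℕ} {ρ : Matrix (Fin d × Fin d) (Fin d × Fin d) ℂ}
    (hρ : IsSeparableDM ρ) {Ψ : Fin d × Fin d → ℂ} (hΨ : IsMaxEnt Ψ) :
    (ρ * vecProj Ψ).trace.re ≤ (d : ℝ)⁻¹ := by
  obtain ⟨m, p, a, b, hp, hp1, ha, hb, rfl⟩ := hρ
  calc (((∑ j, (p j : ℂ) • vecProj (tensorVec (a j) (b j))) * vecProj Ψ).trace).re
      = ∑ j, p j * ‖cinner Ψ (tensorVec (a j) (b j))‖ ^ 2 := by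
        simp [Finset.sum_mul, Matrix.trace_sum, trace_vecProj_mul_vecProj, -Complex.ofReal_pow]
    _ ≤ ∑ j, p j * (d : ℝ)⁻¹ := Finset.sum_le_sum fun j _ =>
        mul_le_mul_of_nonneg_left (hΨ.norm_cinner_tensorVec_sq_le (ha j) (hb j)) (hp j)
    _ = (d : ℝ)⁻¹ := by rw [← Finset.sum_mul, hp1, one_mul]

lemma trace_mul_kronecker_one {α γ : Type*} [Fintype α] [Fintype γ] [DecidableEq γ]
    (ρ : Matrix (α × γ) (α × γ) ℂ) (M : Matrix α α ℂ) :
    (ρ * (M ⊗ₖ 1)).trace = (ptraceC ρ * M).trace := by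
  simp only [Matrix.trace, Matrix.diag_apply, Matrix.mul_apply, Matrix.kroneckerMap_apply,
    Matrix.one_apply, mul_ite, mul_one, mul_zero, Fintype.sum_prod_type, Finset.sum_ite_eq',
    Finset.mem_univ, if_true, ptraceC, Matrix.of_apply, Finset.sum_mul]
  exact Finset.sum_congr rfl fun _ _ => Finset.sum_comm

/-- Theorem 1, fidelity form: if the reduced state of `AB` is separable,
then the fidelity with any target `|Ψ⟩⟨Ψ| ⊗ ρ_C` (with `Ψ` maximally entangled) is at
most `1/√d`; equivalently, the Bures angle is at least `arccos(1/√d)`. -/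
theorem fidelity_to_maxEnt_target_le (d dC : ℕ) (hd : 1 ≤ d)
    (ρABC : Matrix ((Fin d × Fin d) × Fin dC) ((Fin d × Fin d) × Fin dC) ℂ)
    (hρABC : IsDensityMatrix ρABC)
    (hsep : IsSeparableDM (ptraceC ρABC))
    (Ψ : Fin d × Fin d → ℂ) (hΨ : IsMaxEnt Ψ)
    (ρC : Matrix (Fin dC) (Fin dC) ℂ) (hρC : IsDensityMatrix ρC) :
    rootFidelity ρABC (vecProj Ψ ⊗ₖ ρC) ≤ (Real.sqrt d)⁻¹ ∧
      Real.arccos (Real.sqrt d)⁻¹ ≤ Real.arccos (rootFidelity ρABC (vecProj Ψ ⊗ₖ ρC)) := by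
  have hP : vecProj Ψ * vecProj Ψ = vecProj Ψ := vecProj_mul_self (hΨ.cinner_self hd)
  have hsqrt : msqrt (vecProj Ψ ⊗ₖ ρC) = vecProj Ψ ⊗ₖ msqrt ρC := by
    rw [msqrt_kronecker (posSemidef_vecProj Ψ) hρC.1, msqrt_eq_self (posSemidef_vecProj Ψ) hP]
  have hF : rootFidelity ρABC (vecProj Ψ ⊗ₖ ρC) ≤ (√d)⁻¹ :=
    calc rootFidelity ρABC (vecProj Ψ ⊗ₖ ρC)
        ≤ √(ρABC * (vecProj Ψ ⊗ₖ 1)).trace.re * √(vecProj Ψ ⊗ₖ ρC).trace.re := by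
          refine rootFidelity_le_of_mul_msqrt_eq hρABC.1 ((posSemidef_vecProj Ψ).kronecker hρC.1)
            ?_ ?_ ?_
          · exact ((posSemidef_vecProj Ψ).kronecker Matrix.PosSemidef.one).1
          · rw [← Matrix.mul_kronecker_mul, hP, one_mul]
          · rw [hsqrt, ← Matrix.mul_kronecker_mul, hP, one_mul]
      _ = √(ptraceC ρABC * vecProj Ψ).trace.re := by
          rw [trace_mul_kronecker_one, Matrix.trace_kronecker, trace_vecProj, hΨ.cinner_self hd,
            hρC.2]
          simp
      _ ≤ √(d : ℝ)⁻¹ := Real.sqrt_le_sqrt (hsep.re_trace_mul_vecProj_le hΨ)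
      _ = (√d)⁻¹ := Real.sqrt_inv _
  exact ⟨hF, Real.arccos_le_arccos hF⟩

end
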